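/- arXiv:2505.05005 — 2 statements merged into one kernel-verified Lean document; each statement's English description precedes it below -/
import Mathlib

section
/- Let f, g : ℤ_p → ℤ_p be strictly differentiable, and let △ be the operator △(f) = min{ inf_{k≥1} v_p((f(k) − f(k_−))/(k − k_−)), 1 + v_p(f(0)) }. Then △(f·g) ≥ min{△(f), △(g)}. -/
/-- `kminus p k` is `k` with its leading `p`-adic digit deleted. -/
def kminus (p k : ℕ) : ℕ := k % p ^ (Nat.log p k)

/-- `TriangleGE p f c` expresses `△(f) ≥ c` for `f : ℤ_p → ℤ_p`, i.e. both
`v_p((f(k) - f(k₋))/(k - k₋)) ≥ c` for all `k ≥ 1` and `1 + v_p(f(0)) ≥ c`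
(with `v_p(0) = +∞`), stated in terms of norms. -/
def TriangleGE (p : ℕ) [Fact p.Prime] (f : ℤ_[p] → ℤ_[p]) (c : ℤ) : Prop :=
  (∀ k : ℕ, 1 ≤ k →
    ‖f (k : ℤ_[p]) - f (kminus p k : ℤ_[p])‖ ≤
      ‖((k : ℤ_[p]) - (kminus p k : ℤ_[p]))‖ * (p : ℝ) ^ (-c))
  ∧ ‖f 0‖ ≤ (p : ℝ) ^ (-(c - 1))

theorem norm_mul_sub_mul_le_of_norm_le_one {R : Type*} [NormedRing R] [IsUltrametricDist R]
    {a b c d : R} {r : ℝ} (ha : ‖a‖ ≤ 1) (hd : ‖d‖ ≤ 1)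
    (hac : ‖a - c‖ ≤ r) (hbd : ‖b - d‖ ≤ r) : ‖a * b - c * d‖ ≤ r := by
  have hr : 0 ≤ r := (norm_nonneg _).trans hac
  have hsplit : a * b - c * d = a * (b - d) + (a - c) * d := by noncomm_ring
  rw [hsplit]
  refine (IsUltrametricDist.norm_add_le_max _ _).trans (max_le ?_ ?_)
  · calc ‖a * (b - d)‖ ≤ ‖a‖ * ‖b - d‖ := norm_mul_le _ _
      _ ≤ 1 * r := mul_le_mul ha hbd (norm_nonneg _) zero_le_one
      _ = r := one_mul r
  · calc ‖(a - c) * d‖ ≤ ‖a - c‖ * ‖d‖ := norm_mul_le _ _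
      _ ≤ r * 1 := mul_le_mul hac hd (norm_nonneg _) hr
      _ = r := mul_one r

theorem triangle_mul_general (p : ℕ) [Fact p.Prime]
    (f g : ℤ_[p] → ℤ_[p])
    (c : ℤ) (hfc : TriangleGE p f c) (hgc : TriangleGE p g c) :
    TriangleGE p (fun t => f t * g t) c := by
  refine ⟨fun k hk => ?_, ?_⟩
  · exact norm_mul_sub_mul_le_of_norm_le_one (PadicInt.norm_le_one _) (PadicInt.norm_le_one _)
      (hfc.1 k hk) (hgc.1 k hk)
  · calc ‖f 0 * g 0‖ = ‖f 0‖ * ‖g 0‖ := norm_mul _ _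
      _ ≤ ‖f 0‖ := mul_le_of_le_one_right (norm_nonneg _) (PadicInt.norm_le_one _)
      _ ≤ (p : ℝ) ^ (-(c - 1)) := hfc.2

theorem triangle_mul (p : ℕ) [Fact p.Prime]
    (f g : ℤ_[p] → ℤ_[p])
    (hf : ∃ h : ℤ_[p] × ℤ_[p] → ℤ_[p],
      Continuous h ∧ ∀ x y : ℤ_[p], f x - f y = (x - y) * h (x, y))
    (hg : ∃ h : ℤ_[p] × ℤ_[p] → ℤ_[p],
      Continuous h ∧ ∀ x y : ℤ_[p], g x - g y = (x - y) * h (x, y))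
    (c : ℤ) (hfc : TriangleGE p f c) (hgc : TriangleGE p g c) :
    TriangleGE p (fun t => f t * g t) c :=
  triangle_mul_general p f g c hfc hgc
end

section
/- For every integer s ≥ 2, (1/(s−1)) ∫_{ℤ_2} (t + 1/2)^{−(s−1)} dt = 2^s · ζ_2(s), where ζ_2(s) is the 2-adic zeta value defined as (1/(4(s−1))) [ ∫_{ℤ_2} (1+4t)^{−(s−1)} dt + ∫_{ℤ_2} (3+4t)^{−(s−1)} dt ]. -/
/-!
Splitting the Riemann sums over the residues mod 2 gives
`∫ f(t) dt = (∫ f(2t) dt + ∫ f(2t+1) dt) / 2` for the Volkenborn integral. For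
`f(t) = (t + 1/2)^{-(s-1)}` one has `f(2t) = 2^{s-1} (1+4t)^{-(s-1)}` and
`f(2t+1) = 2^{s-1} (3+4t)^{-(s-1)}`, so `∫ f = 2^{s-2} (I₂ + I₃)`, which is the claim.
-/

open Filter

/-- `I` is the Volkenborn integral of `f : ℤ_2 → ℚ_2`. -/
def IsVolkenbornIntegral (f : ℤ_[2] → ℚ_[2]) (I : ℚ_[2]) : Prop :=
  Tendsto (fun N : ℕ => ((2 : ℚ_[2]) ^ N)⁻¹ * ∑ k ∈ Finset.range (2 ^ N), f (k : ℤ_[2]))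
    atTop (nhds I)

theorem Finset.sum_range_two_mul {M : Type*} [AddCommMonoid M] (f : ℕ → M) (n : ℕ) :
    ∑ k ∈ Finset.range (2 * n), f k = ∑ j ∈ Finset.range n, (f (2 * j) + f (2 * j + 1)) := by
  induction n with
  | zero => simp
  | succ n ih =>
    rw [Nat.mul_succ, Finset.sum_range_succ, Finset.sum_range_succ, Finset.sum_range_succ, ih,
      add_assoc]

@[simp, norm_cast]
theorem PadicInt.coe_ofNat {p : ℕ} [Fact p.Prime] (n : ℕ) [n.AtLeastTwo] :
    ((ofNat(n) : ℤ_[p]) : ℚ_[p]) = ofNat(n) :=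
  PadicInt.coe_natCast n

namespace IsVolkenbornIntegral

variable {f : ℤ_[2] → ℚ_[2]} {I : ℚ_[2]}

theorem unique {J : ℚ_[2]} (hI : IsVolkenbornIntegral f I) (hJ : IsVolkenbornIntegral f J) :
    I = J :=
  tendsto_nhds_unique hI hJ

theorem const_mul (hI : IsVolkenbornIntegral f I) (c : ℚ_[2]) :
    IsVolkenbornIntegral (fun t => c * f t) (c * I) := by
  simpa only [IsVolkenbornIntegral, ← Finset.mul_sum, mul_left_comm] using Tendsto.const_mul c hI

theorem of_even_odd {A B : ℚ_[2]} (hA : IsVolkenbornIntegral (fun t => f (2 * t)) A)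
    (hB : IsVolkenbornIntegral (fun t => f (2 * t + 1)) B) :
    IsVolkenbornIntegral f ((A + B) / 2) := by
  unfold IsVolkenbornIntegral at *
  rw [← tendsto_add_atTop_iff_nat 1]
  convert (hA.add hB).div_const 2 using 1
  funext N
  rw [Nat.pow_succ', Finset.sum_range_two_mul, pow_succ', Finset.sum_add_distrib]
  push_cast
  ring

end IsVolkenbornIntegral

theorem inv_add_half_pow_eq {K : Type*} [Field K] [NeZero (2 : K)] (x : K) (n : ℕ) :
    ((x + 1 / 2) ^ n)⁻¹ = 2 ^ n * ((2 * x + 1) ^ n)⁻¹ := by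
  rw [show x + 1 / 2 = (2 * x + 1) / 2 by field_simp, div_pow, inv_div, div_eq_mul_inv]

theorem volkenborn_shift_by_half (s : ℕ) (hs : 2 ≤ s) (I₁ I₂ I₃ : ℚ_[2])
    (hI₁ : IsVolkenbornIntegral (fun t => (((t : ℚ_[2]) + 1 / 2) ^ (s - 1))⁻¹) I₁)
    (hI₂ : IsVolkenbornIntegral (fun t => ((1 + 4 * (t : ℚ_[2])) ^ (s - 1))⁻¹) I₂)
    (hI₃ : IsVolkenbornIntegral (fun t => ((3 + 4 * (t : ℚ_[2])) ^ (s - 1))⁻¹) I₃) :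
    (1 / ((s : ℚ_[2]) - 1)) * I₁ =
      2 ^ s * ((1 / (4 * ((s : ℚ_[2]) - 1))) * (I₂ + I₃)) := by
  have h_even : IsVolkenbornIntegral (fun t => ((((2 * t : ℤ_[2]) : ℚ_[2]) + 1 / 2) ^ (s - 1))⁻¹)
      (2 ^ (s - 1) * I₂) := by
    convert hI₂.const_mul (2 ^ (s - 1)) using 2 with t
    rw [inv_add_half_pow_eq]
    push_cast
    ring
  have h_odd : IsVolkenbornIntegral
      (fun t => ((((2 * t + 1 : ℤ_[2]) : ℚ_[2]) + 1 / 2) ^ (s - 1))⁻¹) (2 ^ (s - 1) * I₃) := by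
    convert hI₃.const_mul (2 ^ (s - 1)) using 2 with t
    rw [inv_add_half_pow_eq]
    push_cast
    ring
  rw [hI₁.unique (IsVolkenbornIntegral.of_even_odd h_even h_odd)]
  obtain ⟨m, rfl⟩ : ∃ m, s = m + 1 := ⟨s - 1, by omega⟩
  push_cast
  ring
end
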